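/- arXiv:0904.2101 — 3 statements merged into one kernel-verified Lean document; each statement's English description precedes it below -/
import Mathlib

section
/- Let x_n be defined by x_1 = 3 and, for n ≥ 2, x_n is the smallest integer greater than x_{n-1} with v_2(x_n) = v_2(n). Then for all t ≥ 0 and 0 ≤ j ≤ 2^t - 1, x_{2^t + j} = 3·2^t + j. -/
/-!
Induct on `t` and, inside the block `[2^t, 2^(t+1))`, on `j`. Within a block each term is one
more than the previous: `3·2^t + j` and `2^t + j` differ by a multiple of `2^t` and `0 < j < 2^t`,
so they have the same `2`-adic valuation. At the start `2^(t+1)` of a new block the previous term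
is `2^(t+2) - 1`, and the least `m ≥ 2^(t+2)` with `v₂(m) = t + 1` is `3·2^(t+1)`.
-/

lemma padicValNat_pow_mul_add {p t j : ℕ} [Fact p.Prime] (k : ℕ) (hj₀ : j ≠ 0) (hj : j < p ^ t) :
    padicValNat p (p ^ t * k + j) = padicValNat p j := by
  have hp : 1 < p := Nat.Prime.one_lt Fact.out
  have hv : padicValNat p j < t :=
    (Nat.pow_lt_pow_iff_right hp).mp ((Nat.le_of_dvd (by omega) pow_padicValNat_dvd).trans_lt hj)
  have hne : p ^ t * k + j ≠ 0 := by omega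
  have hdvd {i : ℕ} (hi : i ≤ t) : p ^ i ∣ p ^ t * k := (pow_dvd_pow p hi).mul_right k
  refine le_antisymm ?_ ((padicValNat_dvd_iff_le hne).mp
    (dvd_add (hdvd hv.le) pow_padicValNat_dvd))
  by_contra! hlt
  have hsum : p ^ (padicValNat p j + 1) ∣ p ^ t * k + j := (padicValNat_dvd_iff_le hne).mpr hlt
  exact pow_succ_padicValNat_not_dvd hj₀ ((Nat.dvd_add_right (hdvd hv)).mp hsum)

lemma succ_mul_pow_le_of_padicValNat_eq {p t m : ℕ} [Fact p.Prime] (hm : p ^ (t + 1) ≤ m)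
    (hv : padicValNat p m = t) : (p + 1) * p ^ t ≤ m := by
  have hp : 0 < p := (Nat.Prime.pos Fact.out)
  obtain ⟨c, rfl⟩ : p ^ t ∣ m := hv ▸ pow_padicValNat_dvd
  have hpc : p ≤ c := by
    rw [pow_succ] at hm
    exact Nat.le_of_mul_le_mul_left hm (by positivity)
  have hcp : c ≠ p := by
    rintro rfl
    rw [← pow_succ, padicValNat.prime_pow] at hv
    omega
  rw [mul_comm]
  exact Nat.mul_le_mul_left _ (by omega)

section

variable {x : ℕ → ℕ}
  (hrec : ∀ n, 2 ≤ n →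
    IsLeast {m : ℕ | x (n - 1) < m ∧ padicValNat 2 m = padicValNat 2 n} (x n))
include hrec

lemma apply_succ_eq_of_lt_two_pow {t j : ℕ} (hj : j + 1 < 2 ^ t)
    (hx : x (2 ^ t + j) = 3 * 2 ^ t + j) : x (2 ^ t + (j + 1)) = 3 * 2 ^ t + (j + 1) := by
  have : Fact (Nat.Prime 2) := ⟨Nat.prime_two⟩
  have hval : padicValNat 2 (3 * 2 ^ t + (j + 1)) = padicValNat 2 (2 ^ t + (j + 1)) := by
    have h₃ := padicValNat_pow_mul_add 3 j.succ_ne_zero hj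
    have h₁ := padicValNat_pow_mul_add 1 j.succ_ne_zero hj
    rw [mul_comm] at h₃
    rw [mul_one] at h₁
    rw [h₃, h₁]
  have hleast := hrec (2 ^ t + (j + 1)) (by have := Nat.one_le_two_pow (n := t); omega)
  rw [show 2 ^ t + (j + 1) - 1 = 2 ^ t + j by omega, hx] at hleast
  exact hleast.unique ⟨⟨by omega, hval⟩, fun m hm => hm.1⟩

lemma apply_two_pow_succ_eq {t : ℕ} (hx : x (2 ^ t + (2 ^ t - 1)) = 3 * 2 ^ t + (2 ^ t - 1)) :
    x (2 ^ (t + 1)) = 3 * 2 ^ (t + 1) := by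
  have : Fact (Nat.Prime 2) := ⟨Nat.prime_two⟩
  have hpos := Nat.one_le_two_pow (n := t)
  have hval : padicValNat 2 (3 * 2 ^ (t + 1)) = padicValNat 2 (2 ^ (t + 1)) := by
    rw [padicValNat.mul (by norm_num) (by positivity)]
    simp [padicValNat.eq_zero_of_not_dvd (show ¬ 2 ∣ 3 by norm_num)]
  have hleast := hrec (2 ^ (t + 1)) (by rw [pow_succ]; omega)
  rw [show 2 ^ (t + 1) - 1 = 2 ^ t + (2 ^ t - 1) by rw [pow_succ]; omega, hx,
    padicValNat.prime_pow] at hleast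
  refine hleast.unique ⟨⟨by rw [pow_succ]; omega, by rw [hval, padicValNat.prime_pow]⟩,
    fun m ⟨hm, hv⟩ => succ_mul_pow_le_of_padicValNat_eq ?_ hv⟩
  rw [pow_succ, pow_succ]
  omega

end

/-- If `x 1 = 3` and for `n ≥ 2` the term `x n` is the smallest integer greater
than `x (n-1)` with `v₂(x n) = v₂(n)`, then `x (2^t + j) = 3·2^t + j` for all
`t ≥ 0` and `0 ≤ j ≤ 2^t - 1`. -/
theorem stmt6 (x : ℕ → ℕ) (h1 : x 1 = 3)
    (hrec : ∀ n, 2 ≤ n →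
      IsLeast {m : ℕ | x (n - 1) < m ∧ padicValNat 2 m = padicValNat 2 n} (x n)) :
    ∀ t j : ℕ, j ≤ 2 ^ t - 1 → x (2 ^ t + j) = 3 * 2 ^ t + j := by
  intro t
  induction t with
  | zero =>
    intro j hj
    obtain rfl : j = 0 := by simpa using hj
    simpa using h1
  | succ t ih =>
    intro j hj
    induction j with
    | zero => simpa using apply_two_pow_succ_eq hrec (ih _ le_rfl)
    | succ j ihj =>
      have hpos := Nat.one_le_two_pow (n := t + 1)
      exact apply_succ_eq_of_lt_two_pow hrec (by omega) (ihj (by omega))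
end

section
/- Let a > 1 be odd and define x_n^{(a)} by x_1 = a and x_n being the smallest integer greater than x_{n-1} with v_2(x_n) = v_2(n); define x_n^{(3)} analogously with first term 3. Then there exists N such that x_n^{(a)} = x_n^{(3)} for all n ≥ N. -/
/-!
On the dyadic block `[2^k, 2^(k+1))` a minimal sequence has the shape `x (2^k + j) = c_k * 2^k + j`
with `c_k` odd: inside a block `v₂ (c * 2^k + j) = v₂ (2^k + j)`, so each term is its predecessor
plus one, and at `2^(k+1)` the sequence jumps to the least odd multiple of `2^(k+1)` above the block,
which gives `c_(k+1) = coeffStep c_k`. On odd numbers `coeffStep` fixes `1` and `3` and strictly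
decreases every odd `c ≥ 5`, so any odd start `a ≥ 3` reaches the fixed point `3` after `a` blocks.
-/

/-- The least odd `t` with `c < 2 * t`, for odd `c`. -/
def coeffStep (c : ℕ) : ℕ := if c % 4 = 1 then (c + 1) / 2 else (c + 3) / 2

def IsMinimalTwoAdicSeq (x : ℕ → ℕ) : Prop :=
  ∀ n, 2 ≤ n → IsLeast {m : ℕ | x (n - 1) < m ∧ padicValNat 2 m = padicValNat 2 n} (x n)

section coeffStep

variable {c : ℕ}

lemma odd_coeffStep (hc : Odd c) : Odd (coeffStep c) := by
  rw [Nat.odd_iff] at hc ⊢; unfold coeffStep; split <;> omega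

lemma lt_two_mul_coeffStep (c : ℕ) : c < 2 * coeffStep c := by
  unfold coeffStep; split <;> omega

lemma coeffStep_le {t : ℕ} (hc : Odd c) (ht : Odd t) (hct : c < 2 * t) : coeffStep c ≤ t := by
  rw [Nat.odd_iff] at hc ht; unfold coeffStep; split <;> omega

lemma coeffStep_three : coeffStep 3 = 3 := rfl

lemma three_le_coeffStep (h : 3 ≤ c) : 3 ≤ coeffStep c := by
  unfold coeffStep; split <;> omega

lemma coeffStep_lt (hc : Odd c) (h : 3 < c) : coeffStep c < c := by
  rw [Nat.odd_iff] at hc; unfold coeffStep; split <;> omega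

lemma coeffStep_iterate_eq_three {k : ℕ} (hc : Odd c) (h3 : 3 ≤ c) (hck : c ≤ k + 3) :
    coeffStep^[k] c = 3 := by
  induction k generalizing c with
  | zero => rw [Function.iterate_zero_apply]; omega
  | succ k ih =>
    rw [Function.iterate_succ_apply]
    rcases h3.eq_or_lt with rfl | h3
    · exact Function.iterate_fixed coeffStep_three k
    · exact ih (odd_coeffStep hc) (three_le_coeffStep h3.le) (by have := coeffStep_lt hc h3; omega)

end coeffStep

section padicValNat

variable {p : ℕ} [hp : Fact p.Prime]

lemma padicValNat_pow_mul_of_not_dvd (k : ℕ) {u : ℕ} (hu : ¬p ∣ u) :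
    padicValNat p (p ^ k * u) = k := by
  have hu0 : u ≠ 0 := by rintro rfl; exact hu (dvd_zero p)
  rw [padicValNat.mul (pow_ne_zero k hp.out.ne_zero) hu0, padicValNat.prime_pow,
    padicValNat.eq_zero_of_not_dvd hu, add_zero]

lemma padicValNat_mul_pow_add (c : ℕ) {k j : ℕ} (hj : j ≠ 0) (hjk : j < p ^ k) :
    padicValNat p (c * p ^ k + j) = padicValNat p j := by
  have hsum : c * p ^ k + j ≠ 0 := by omega
  have hvk : padicValNat p j < k := by
    rw [← Nat.pow_lt_pow_iff_right hp.out.one_lt]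
    exact (Nat.le_of_dvd (Nat.pos_of_ne_zero hj) pow_padicValNat_dvd).trans_lt hjk
  have hdvd : ∀ i ≤ k, p ^ i ∣ c * p ^ k + j ↔ p ^ i ∣ j := fun i hi =>
    Nat.dvd_add_right ((pow_dvd_pow p hi).mul_left c)
  apply le_antisymm
  · by_contra! h
    exact pow_succ_padicValNat_not_dvd hj ((hdvd _ hvk).1 ((padicValNat_dvd_iff_le hsum).2 h))
  · exact (padicValNat_dvd_iff_le hsum).1 ((hdvd _ hvk.le).2 pow_padicValNat_dvd)

end padicValNat

lemma eq_two_pow_mul_odd_of_padicValNat_eq {m k : ℕ} (hm : m ≠ 0) (hv : padicValNat 2 m = k) :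
    ∃ t, Odd t ∧ m = 2 ^ k * t := by
  obtain ⟨e, t, ht, rfl⟩ := Nat.exists_eq_two_pow_mul_odd hm
  rw [padicValNat_pow_mul_of_not_dvd e ht.not_two_dvd_nat] at hv
  exact ⟨t, ht, hv ▸ rfl⟩

lemma isLeast_succ {a : ℕ} {P : ℕ → Prop} (h : P (a + 1)) : IsLeast {m | a < m ∧ P m} (a + 1) :=
  ⟨⟨lt_add_one a, h⟩, fun _ hm => hm.1⟩

lemma isLeast_coeffStep_mul_two_pow {c : ℕ} (hc : Odd c) (k : ℕ) :
    IsLeast {m | c * 2 ^ k + (2 ^ k - 1) < m ∧ padicValNat 2 m = k + 1}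
      (coeffStep c * 2 ^ (k + 1)) := by
  have hpow : 0 < 2 ^ k := Nat.two_pow_pos k
  refine ⟨⟨?_, ?_⟩, fun m ⟨hlt, hv⟩ => ?_⟩
  · have h := Nat.mul_le_mul_right (2 ^ k) (lt_two_mul_coeffStep c)
    rw [Nat.succ_mul] at h
    rw [show coeffStep c * 2 ^ (k + 1) = 2 * coeffStep c * 2 ^ k by ring]
    omega
  · rw [mul_comm, padicValNat_pow_mul_of_not_dvd _ (odd_coeffStep hc).not_two_dvd_nat]
  · obtain ⟨t, ht, rfl⟩ := eq_two_pow_mul_odd_of_padicValNat_eq (by omega) hv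
    have hct : c < 2 * t := by
      by_contra! h
      have := Nat.mul_le_mul_right (2 ^ k) h
      rw [show 2 ^ (k + 1) * t = 2 * t * 2 ^ k by ring] at hlt
      omega
    rw [mul_comm]
    exact Nat.mul_le_mul_left _ (coeffStep_le hc ht hct)

namespace IsMinimalTwoAdicSeq

variable {x : ℕ → ℕ}

lemma eq_mul_two_pow_add (hx : IsMinimalTwoAdicSeq x) {c k : ℕ} (hstart : x (2 ^ k) = c * 2 ^ k)
    {j : ℕ} (hj : j < 2 ^ k) :
    x (2 ^ k + j) = c * 2 ^ k + j := by
  induction j with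
  | zero => exact hstart
  | succ j ih =>
    have hvj : padicValNat 2 (c * 2 ^ k + (j + 1)) = padicValNat 2 (2 ^ k + (j + 1)) := by
      rw [padicValNat_mul_pow_add c (by omega) hj, ← one_mul (2 ^ k),
        padicValNat_mul_pow_add 1 (by omega) hj]
    have hrec := hx (2 ^ k + (j + 1)) (by have := Nat.one_le_two_pow (n := k); omega)
    rw [show 2 ^ k + (j + 1) - 1 = 2 ^ k + j by omega, ih (by omega)] at hrec
    exact hrec.unique (isLeast_succ hvj)

lemma eq_mul_two_pow_succ (hx : IsMinimalTwoAdicSeq x) {c k : ℕ} (hc : Odd c)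
    (hstart : x (2 ^ k) = c * 2 ^ k) :
    x (2 ^ (k + 1)) = coeffStep c * 2 ^ (k + 1) := by
  have hpow : 0 < 2 ^ k := Nat.two_pow_pos k
  have hlast := hx.eq_mul_two_pow_add hstart (j := 2 ^ k - 1) (by omega)
  have hrec := hx (2 ^ (k + 1)) (Nat.le_self_pow (by omega) 2)
  rw [show 2 ^ (k + 1) - 1 = 2 ^ k + (2 ^ k - 1) by rw [pow_succ]; omega, hlast,
    padicValNat.prime_pow] at hrec
  exact hrec.unique (isLeast_coeffStep_mul_two_pow hc k)

lemma eq_iterate_coeffStep_mul_two_pow (hx : IsMinimalTwoAdicSeq x) {c : ℕ} (h1 : x 1 = c)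
    (hc : Odd c) (k : ℕ) : x (2 ^ k) = coeffStep^[k] c * 2 ^ k := by
  induction k with
  | zero => simpa using h1
  | succ k ih =>
    rw [Function.iterate_succ_apply']
    exact hx.eq_mul_two_pow_succ (Function.Iterate.rec Odd hc (fun _ => odd_coeffStep) k) ih

lemma eq_iterate_coeffStep (hx : IsMinimalTwoAdicSeq x) {c : ℕ} (h1 : x 1 = c) (hc : Odd c)
    {k j : ℕ} (hj : j < 2 ^ k) : x (2 ^ k + j) = coeffStep^[k] c * 2 ^ k + j :=
  hx.eq_mul_two_pow_add (hx.eq_iterate_coeffStep_mul_two_pow h1 hc k) hj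

end IsMinimalTwoAdicSeq

lemma exists_eq_two_pow_add_of_two_pow_le {a n : ℕ} (hn : 2 ^ a ≤ n) :
    ∃ k j, a ≤ k ∧ j < 2 ^ k ∧ n = 2 ^ k + j := by
  have hn0 : n ≠ 0 := by have := Nat.one_le_two_pow (n := a); omega
  refine ⟨Nat.log 2 n, n - 2 ^ Nat.log 2 n, (Nat.le_log_iff_pow_le one_lt_two hn0).2 hn, ?_, ?_⟩
  · have := Nat.lt_pow_succ_log_self one_lt_two n
    rw [pow_succ] at this; omega
  · have := Nat.pow_log_le_self 2 hn0; omega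

/-- Every minimal recursive sequence (w.r.t. 2-adic valuation) starting at an odd
`a > 1` eventually coincides with the one starting at `3`. -/
theorem stmt8 (a : ℕ) (ha : 1 < a) (haodd : Odd a)
    (xa x3 : ℕ → ℕ) (h1a : xa 1 = a) (h13 : x3 1 = 3)
    (hreca : ∀ n, 2 ≤ n →
      IsLeast {m : ℕ | xa (n - 1) < m ∧ padicValNat 2 m = padicValNat 2 n} (xa n))
    (hrec3 : ∀ n, 2 ≤ n →
      IsLeast {m : ℕ | x3 (n - 1) < m ∧ padicValNat 2 m = padicValNat 2 n} (x3 n)) :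
    ∃ N : ℕ, ∀ n, N ≤ n → xa n = x3 n := by
  have h3a : 3 ≤ a := by rcases haodd with ⟨r, rfl⟩; omega
  refine ⟨2 ^ a, fun n hn => ?_⟩
  obtain ⟨k, j, hak, hj, rfl⟩ := exists_eq_two_pow_add_of_two_pow_le hn
  rw [IsMinimalTwoAdicSeq.eq_iterate_coeffStep hreca h1a haodd hj,
    IsMinimalTwoAdicSeq.eq_iterate_coeffStep hrec3 h13 (by decide) hj,
    coeffStep_iterate_eq_three haodd h3a (by omega), Function.iterate_fixed coeffStep_three]
end

section
/- Define x_n by x_1 = 4 and, for n ≥ 2, x_n is the smallest integer greater than x_{n-1} with t(x_n) = t(n), where t is the Thue-Morse sequence. Then for every n ≡ 1 (mod 4), x_n ≡ 4 (mod 8) and x_{n+8} - x_n = 16. -/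
/-!
Writing `t` for the Thue–Morse sequence, `t (2m) = t m` and `t (2m+1) = 1 - t m`. If `x (n-1)` is
`2n` or `2n+1`, then `2n+1` is excluded since `t (2n+1) ≠ t n`, while exactly one of `2n+2`,
`2n+3` has the parity `t n`; so by induction `x n ∈ {2n+2, 2n+3}` for all `n ≥ 1`. For
`n ≡ 1 (mod 4)` we have `t (n+1) = t n = t (2n+2)`, hence `x n = 2n+2`.
-/

def thueMorse (m : ℕ) : ℕ := (Nat.digits 2 m).sum % 2

theorem thueMorse_lt_two (m : ℕ) : thueMorse m < 2 := Nat.mod_lt _ two_pos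

theorem thueMorse_add_two_mul {b : ℕ} (hb : b < 2) (m : ℕ) :
    thueMorse (b + 2 * m) = (b + thueMorse m) % 2 := by
  rcases Nat.eq_zero_or_pos b with rfl | hb0
  · rcases Nat.eq_zero_or_pos m with rfl | hm0
    · rfl
    · rw [thueMorse, Nat.digits_add 2 one_lt_two 0 m two_pos (Or.inr hm0.ne'), List.sum_cons,
        zero_add, zero_add, thueMorse, Nat.mod_mod]
  · rw [thueMorse, Nat.digits_add 2 one_lt_two b m hb (Or.inl hb0.ne'), List.sum_cons,
      thueMorse, Nat.add_mod_mod]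

theorem thueMorse_two_mul (m : ℕ) : thueMorse (2 * m) = thueMorse m := by
  simpa [Nat.mod_eq_of_lt (thueMorse_lt_two m)] using thueMorse_add_two_mul two_pos m

theorem thueMorse_two_mul_add_one (m : ℕ) : thueMorse (2 * m + 1) = (thueMorse m + 1) % 2 := by
  rw [add_comm, thueMorse_add_two_mul one_lt_two, add_comm]

theorem thueMorse_two_mul_add_one_ne (m : ℕ) : thueMorse (2 * m + 1) ≠ thueMorse m := by
  have := thueMorse_lt_two m
  rw [thueMorse_two_mul_add_one]
  omega

theorem thueMorse_add_one_of_mod_four_eq_one {n : ℕ} (hn : n % 4 = 1) :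
    thueMorse (n + 1) = thueMorse n := by
  obtain ⟨k, rfl⟩ : ∃ k, n = 2 * (2 * k) + 1 := ⟨n / 4, by omega⟩
  rw [show 2 * (2 * k) + 1 + 1 = 2 * (2 * k + 1) by ring, thueMorse_two_mul,
    thueMorse_two_mul_add_one, thueMorse_two_mul_add_one, thueMorse_two_mul]

theorem div_two_eq_succ_of_isLeast_thueMorse {X Y n : ℕ} (hX : X / 2 = n)
    (hY : IsLeast {m | X < m ∧ thueMorse m = thueMorse n} Y) : Y / 2 = n + 1 := by
  have hle : Y ≤ 2 * (n + 1) + 1 := by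
    have h_even := thueMorse_two_mul (n + 1)
    have h_odd := thueMorse_two_mul_add_one (n + 1)
    have := thueMorse_lt_two n
    have := thueMorse_lt_two (n + 1)
    by_cases h : thueMorse (n + 1) = thueMorse n
    · exact (hY.2 ⟨by omega, h_even.trans h⟩).trans (by omega)
    · exact hY.2 ⟨by omega, by omega⟩
  have hne : Y ≠ 2 * n + 1 := fun h => thueMorse_two_mul_add_one_ne n (h ▸ hY.1.2)
  have := hY.1.1
  omega

def IsGreedyThueMorse (x : ℕ → ℕ) : Prop :=
  ∀ n, 2 ≤ n → IsLeast {m | x (n - 1) < m ∧ thueMorse m = thueMorse n} (x n)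

namespace IsGreedyThueMorse

variable {x : ℕ → ℕ}

theorem div_two (hx : IsGreedyThueMorse x) (h1 : x 1 = 4) {n : ℕ} (hn : 1 ≤ n) :
    x n / 2 = n + 1 := by
  induction n, hn using Nat.le_induction with
  | base => rw [h1]
  | succ n hn ih => exact div_two_eq_succ_of_isLeast_thueMorse ih (hx (n + 1) (by omega))

theorem eq_of_mod_four_eq_one (hx : IsGreedyThueMorse x) (h1 : x 1 = 4) {n : ℕ} (hn : 1 ≤ n)
    (h4 : n % 4 = 1) : x n = 2 * n + 2 := by
  rcases hn.eq_or_lt with rfl | hn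
  · exact h1
  have hdiv := hx.div_two h1 hn.le
  have hparity := (hx n hn).1.2
  have hodd : thueMorse (2 * (n + 1) + 1) ≠ thueMorse n :=
    thueMorse_add_one_of_mod_four_eq_one h4 ▸ thueMorse_two_mul_add_one_ne (n + 1)
  by_contra hne
  exact hodd (by rwa [show 2 * (n + 1) + 1 = x n by omega])

end IsGreedyThueMorse

/-- For the minimal recursive sequence with `x 1 = 4` w.r.t. the parity of the
binary digit sum (Thue–Morse `t`), if `n ≡ 1 (mod 4)` then `x n ≡ 4 (mod 8)`
and `x (n+8) - x n = 16`. -/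
theorem stmt14 (x : ℕ → ℕ) (h1 : x 1 = 4)
    (hrec : ∀ n, 2 ≤ n →
      IsLeast {m : ℕ | x (n - 1) < m ∧
        (Nat.digits 2 m).sum % 2 = (Nat.digits 2 n).sum % 2} (x n)) :
    ∀ n, 1 ≤ n → n % 4 = 1 → x n % 8 = 4 ∧ x (n + 8) - x n = 16 := by
  intro n hn h4
  have hx : IsGreedyThueMorse x := hrec
  have hxn := hx.eq_of_mod_four_eq_one h1 hn h4
  have hxn8 := hx.eq_of_mod_four_eq_one h1 (n := n + 8) (by omega) (by omega)
  omega
end
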